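/- arXiv:1803.02703 — 5 statements merged into one kernel-verified Lean document; each statement's English description precedes it below -/
import Mathlib

section
/- If P and Q are two internally disjoint induced x-y-paths in a graph G, each of length greater than ℓ/2, and G has no chordless (induced) cycle of length greater than ℓ, then the cycle P ∪ Q has a chord, and every such chord joins an internal vertex of P to an internal vertex of Q. -/
open SimpleGraph

/-- A walk is chordless (induced) if every edge of `G` joining two of its
vertices is an edge of the walk. -/
def WalkInduced {V : Type} {G : SimpleGraph V} {u v : V} (W : G.Walk u v) : Prop :=
  ∀ a b : V, a ∈ W.support → b ∈ W.support → G.Adj a b → s(a, b) ∈ W.edges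

/-- `G` is `ℓ`-chordal: no chordless cycle of length greater than `ℓ`. -/
def LChordal {V : Type} (G : SimpleGraph V) (ℓ : ℕ) : Prop :=
  ∀ (v : V) (C : G.Walk v v), C.IsCycle → WalkInduced C → C.length ≤ ℓ

/-!
If `P ∪ Q` had no chord, the cycle `P ∪ Q` would be chordless of length `|P| + |Q| > ℓ`,
contradicting `ℓ`-chordality. A chord cannot have both ends on `P` (or both on `Q`) because these
paths are induced, and for the same reason an end of a chord lying on `P` is not an end of `Q`,
i.e. neither `x` nor `y`.
-/

namespace SimpleGraph.Walk

variable {V : Type} {G : SimpleGraph V} {x y : V}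

lemma IsPath.start_notMem_support_tail {u v : V} {p : G.Walk u v} (hp : p.IsPath) :
    u ∉ p.support.tail :=
  (List.nodup_cons.mp (p.cons_tail_support ▸ hp.support_nodup)).1

lemma IsPath.isCycle_append_reverse {P Q : G.Walk x y} (hP : P.IsPath) (hQ : Q.IsPath)
    (hdisj : ∀ v, v ∈ P.support → v ∈ Q.support → v = x ∨ v = y) (hlen : 1 < P.length) :
    (P.append Q.reverse).IsCycle := by
  refine hP.isCycle_append hQ.reverse (List.disjoint_left.mpr fun v hvP hvQ => ?_) (.inl hlen)
  have hvQ' : v ∈ Q.support := by simpa using List.mem_of_mem_tail hvQ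
  rcases hdisj v (List.mem_of_mem_tail hvP) hvQ' with rfl | rfl
  · exact hP.start_notMem_support_tail hvP
  · exact hQ.reverse.start_notMem_support_tail hvQ

lemma walkInduced_append_reverse_of_chordless {P Q : G.Walk x y}
    (h : ∀ a b, G.Adj a b → a ∈ P.support ++ Q.support → b ∈ P.support ++ Q.support →
      s(a, b) ∉ P.edges → s(a, b) ∈ Q.edges) :
    WalkInduced (P.append Q.reverse) := by
  intro a b ha hb hab
  have hsupp : ∀ v ∈ (P.append Q.reverse).support, v ∈ P.support ++ Q.support := by
    intro v hv
    simpa [mem_support_append_iff] using hv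
  rw [edges_append, edges_reverse, List.mem_append, List.mem_reverse]
  by_cases hP : s(a, b) ∈ P.edges
  · exact .inl hP
  · exact .inr (h a b hab (hsupp a ha) (hsupp b hb) hP)

end SimpleGraph.Walk

section Chords

variable {V : Type} {G : SimpleGraph V} {x y : V}

lemma WalkInduced.ne_of_chord {P Q : G.Walk x y} (hPind : WalkInduced P)
    (hQind : WalkInduced Q) {a b : V} (hab : G.Adj a b) (ha : a ∈ P.support)
    (hb : b ∈ Q.support) (hnP : s(a, b) ∉ P.edges) (hnQ : s(a, b) ∉ Q.edges) :
    a ≠ x ∧ a ≠ y ∧ b ≠ x ∧ b ≠ y := by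
  refine ⟨?_, ?_, ?_, ?_⟩ <;> rintro rfl
  · exact hnQ (hQind _ _ Q.start_mem_support hb hab)
  · exact hnQ (hQind _ _ Q.end_mem_support hb hab)
  · exact hnP (hPind _ _ ha P.start_mem_support hab)
  · exact hnP (hPind _ _ ha P.end_mem_support hab)

lemma WalkInduced.chord_internal {P Q : G.Walk x y} (hPind : WalkInduced P)
    (hQind : WalkInduced Q) {a b : V} (hab : G.Adj a b)
    (ha : a ∈ P.support ++ Q.support) (hb : b ∈ P.support ++ Q.support)
    (hnP : s(a, b) ∉ P.edges) (hnQ : s(a, b) ∉ Q.edges) :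
    (a ∈ P.support ∧ a ≠ x ∧ a ≠ y ∧ b ∈ Q.support ∧ b ≠ x ∧ b ≠ y) ∨
      (b ∈ P.support ∧ b ≠ x ∧ b ≠ y ∧ a ∈ Q.support ∧ a ≠ x ∧ a ≠ y) := by
  rw [List.mem_append] at ha hb
  rcases ha with haP | haQ <;> rcases hb with hbP | hbQ
  · exact absurd (hPind a b haP hbP hab) hnP
  · obtain ⟨hax, hay, hbx, hby⟩ := hPind.ne_of_chord hQind hab haP hbQ hnP hnQ
    exact .inl ⟨haP, hax, hay, hbQ, hbx, hby⟩
  · rw [Sym2.eq_swap] at hnP hnQ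
    obtain ⟨hbx, hby, hax, hay⟩ := hPind.ne_of_chord hQind hab.symm hbP haQ hnP hnQ
    exact .inr ⟨hbP, hbx, hby, haQ, hax, hay⟩
  · exact absurd (hQind a b haQ hbQ hab) hnQ

end Chords

theorem stmt_0 {V : Type} (G : SimpleGraph V) (ℓ : ℕ) (hℓ : 4 ≤ ℓ)
    (hGchordal : LChordal G ℓ)
    (x y : V) (P Q : G.Walk x y)
    (hP : P.IsPath) (hQ : Q.IsPath)
    (hPind : WalkInduced P) (hQind : WalkInduced Q)
    (hdisj : ∀ v : V, v ∈ P.support → v ∈ Q.support → v = x ∨ v = y)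
    (hPlen : ℓ < 2 * P.length) (hQlen : ℓ < 2 * Q.length) :
    -- the cycle `P ∪ Q` has a chord …
    (∃ a b : V, G.Adj a b ∧ a ∈ P.support ++ Q.support ∧ b ∈ P.support ++ Q.support ∧
        s(a, b) ∉ P.edges ∧ s(a, b) ∉ Q.edges) ∧
    -- … and every chord joins an internal vertex of `P` to an internal vertex of `Q`
    (∀ a b : V, G.Adj a b → a ∈ P.support ++ Q.support → b ∈ P.support ++ Q.support →
        s(a, b) ∉ P.edges → s(a, b) ∉ Q.edges →
        (a ∈ P.support ∧ a ≠ x ∧ a ≠ y ∧ b ∈ Q.support ∧ b ≠ x ∧ b ≠ y) ∨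
        (b ∈ P.support ∧ b ≠ x ∧ b ≠ y ∧ a ∈ Q.support ∧ a ≠ x ∧ a ≠ y)) := by
  refine ⟨?_, fun a b => hPind.chord_internal hQind⟩
  by_contra! hchordless
  have hcycle := hP.isCycle_append_reverse hQ hdisj (by omega)
  have hshort := hGchordal x _ hcycle (Walk.walkInduced_append_reverse_of_chordless hchordless)
  rw [Walk.length_append, Walk.length_reverse] at hshort
  omega
end

section
/- In a tree T on at least k vertices, if C₁, …, Cₙ are subtrees of T such that no k of them are pairwise vertex-disjoint, then there is a set S of at most k-1 vertices of T meeting every Cᵢ. -/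
/-!
Root the tree at a vertex `r`. In a subtree, the vertex `t` closest to `r` lies on the path from
`r` to every other vertex of the subtree. Choose a subtree `C` whose closest vertex `t` is as far
from `r` as possible. If a subtree `D` meets `C` at `u`, then its own closest vertex `s` and `t`
both lie on the path from `r` to `u`, with `s` no farther from `r`; so `t` lies on the path from
`s` to `u`, which stays inside `D`. Hence `t` meets every subtree meeting `C`. Put `t` into the
hitting set and recurse on the subtrees avoiding `t`: adding `C` to any pairwise disjoint family
of those gives a larger one, so they contain no `k - 1` pairwise disjoint members.
-/

namespace SimpleGraph

variable {V : Type*}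

theorem Walk.IsPath.append {G : SimpleGraph V} {u v w : V} {p : G.Walk u v} {q : G.Walk v w}
    (hp : p.IsPath) (hq : q.IsPath) (h : ∀ x ∈ p.support, x ∈ q.support → x = v) :
    (p.append q).IsPath := by
  have hq' : (v :: q.support.tail).Nodup := q.cons_tail_support ▸ hq.support_nodup
  rw [Walk.isPath_def, Walk.support_append, List.nodup_append]
  refine ⟨hp.support_nodup, (List.nodup_cons.mp hq').2, ?_⟩
  rintro x hx y hy rfl
  rw [h x hx (List.mem_of_mem_tail hy)] at hy
  exact (List.nodup_cons.mp hq').1 hy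

namespace IsTree

variable {T : SimpleGraph V}

section

variable (hT : T.IsTree)

noncomputable def path (u w : V) : T.Walk u w :=
  (hT.existsUnique_path u w).exists.choose

theorem isPath_path (u w : V) : (hT.path u w).IsPath :=
  (hT.existsUnique_path u w).exists.choose_spec

theorem eq_path {u w : V} {q : T.Walk u w} (hq : q.IsPath) : q = hT.path u w :=
  (hT.existsUnique_path u w).unique hq (hT.isPath_path u w)

theorem length_path (u w : V) : (hT.path u w).length = T.dist u w := by
  obtain ⟨q, hq, hlen⟩ := hT.connected.exists_path_of_dist u w
  rw [← hT.eq_path hq, hlen]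

theorem path_append_path {u v w : V} (h : v ∈ (hT.path u w).support) :
    (hT.path u v).append (hT.path v w) = hT.path u w := by
  obtain ⟨p, q, hp, hq, hpq⟩ := ((hT.isPath_path u w).mem_support_iff_exists_append).mp h
  rw [hpq, ← hT.eq_path hp, ← hT.eq_path hq]

theorem dist_add_dist_of_mem_support_path {u v w : V} (h : v ∈ (hT.path u w).support) :
    T.dist u v + T.dist v w = T.dist u w := by
  rw [← hT.length_path, ← hT.length_path, ← hT.length_path, ← hT.path_append_path h,
    Walk.length_append]

theorem eq_of_mem_support_path_of_dist_le {u v w : V} (h : v ∈ (hT.path u w).support)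
    (hle : T.dist u w ≤ T.dist u v) : v = w := by
  have hvw := hT.dist_add_dist_of_mem_support_path h
  exact (hT.connected.preconnected v w).dist_eq_zero_iff.mp (by omega)

theorem mem_of_mem_support_path {C : Set V} (hC : (T.induce C).Connected) {u w : V}
    (hu : u ∈ C) (hw : w ∈ C) {x : V} (hx : x ∈ (hT.path u w).support) : x ∈ C := by
  classical
  obtain ⟨q⟩ := hC.preconnected ⟨u, hu⟩ ⟨w, hw⟩
  have hq : ((q.map (Embedding.induce C).toHom).bypass : T.Walk u w) = hT.path u w :=
    hT.eq_path (Walk.bypass_isPath _)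
  rw [← hq] at hx
  obtain ⟨y, -, rfl⟩ := List.mem_map.mp
    (Walk.support_map _ q ▸ Walk.support_bypass_subset_support _ hx)
  exact y.2

theorem mem_support_path_of_forall_dist_le {C : Set V} (hC : (T.induce C).Connected)
    {r t u : V} (ht : t ∈ C) (hmin : ∀ x ∈ C, T.dist r t ≤ T.dist r x) (hu : u ∈ C) :
    t ∈ (hT.path r u).support := by
  have hpath : ((hT.path r t).append (hT.path t u)).IsPath :=
    (hT.isPath_path r t).append (hT.isPath_path t u) fun x hxr hxu =>
      hT.eq_of_mem_support_path_of_dist_le hxr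
        (hmin x (hT.mem_of_mem_support_path hC ht hu hxu))
  rw [← hT.eq_path hpath, Walk.mem_support_append_iff]
  exact Or.inl (Walk.end_mem_support _)

end

theorem mem_of_not_disjoint_of_dist_le (hT : T.IsTree) {C D : Set V}
    (hC : (T.induce C).Connected) (hD : (T.induce D).Connected) {r s t : V}
    (ht : t ∈ C) (htmin : ∀ x ∈ C, T.dist r t ≤ T.dist r x)
    (hs : s ∈ D) (hsmin : ∀ x ∈ D, T.dist r s ≤ T.dist r x)
    (hst : T.dist r s ≤ T.dist r t) (hCD : ¬Disjoint C D) : t ∈ D := by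
  obtain ⟨u, huC, huD⟩ := Set.not_disjoint_iff.mp hCD
  have htu := hT.mem_support_path_of_forall_dist_le hC ht htmin huC
  rw [← hT.path_append_path (hT.mem_support_path_of_forall_dist_le hD hs hsmin huD),
    Walk.mem_support_append_iff] at htu
  rcases htu with htr | htu
  · exact hT.eq_of_mem_support_path_of_dist_le htr hst ▸ hs
  · exact hT.mem_of_mem_support_path hD hs huD htu

theorem exists_mem_forall_not_disjoint_imp_mem (hT : T.IsTree) {ι : Type*} {C : ι → Set V}
    (hC : ∀ i, (T.induce (C i)).Connected) {A : Finset ι} (hA : A.Nonempty) :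
    ∃ i ∈ A, ∃ v ∈ C i, ∀ j ∈ A, ¬Disjoint (C i) (C j) → v ∈ C j := by
  obtain ⟨⟨r, -⟩⟩ := (hC hA.choose).nonempty
  have hclosest (i : ι) : ∃ t ∈ C i, ∀ x ∈ C i, T.dist r t ≤ T.dist r x :=
    have hne := Set.nonempty_coe_sort.mp (hC i).nonempty
    ⟨_, Function.argminOn_mem _ _ hne, fun _ hx => Function.argminOn_le _ _ hx⟩
  choose top htop htop_min using hclosest
  obtain ⟨i, hi, hmax⟩ := A.exists_max_image (fun i => T.dist r (top i)) hA
  exact ⟨i, hi, top i, htop i, fun j hj hij => hT.mem_of_not_disjoint_of_dist_le (hC i) (hC j)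
    (htop i) (htop_min i) (htop j) (htop_min j) (hmax j hj) hij⟩

end IsTree

end SimpleGraph

theorem exists_hitting_finset_of_not_exists_pairwiseDisjoint {ι V : Type*} {C : ι → Set V}
    (hcommon : ∀ A : Finset ι, A.Nonempty →
      ∃ i ∈ A, ∃ v ∈ C i, ∀ j ∈ A, ¬Disjoint (C i) (C j) → v ∈ C j)
    (k : ℕ) (A : Finset ι) (hA : ¬∃ I ⊆ A, I.card = k ∧ (I : Set ι).PairwiseDisjoint C) :
    ∃ S : Finset V, S.card < k ∧ ∀ i ∈ A, ∃ v ∈ S, v ∈ C i := by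
  classical
  induction k generalizing A with
  | zero => exact absurd ⟨∅, A.empty_subset, rfl, by simp⟩ hA
  | succ k ih =>
    obtain rfl | hne := A.eq_empty_or_nonempty
    · exact ⟨∅, by simp, by simp⟩
    obtain ⟨i, hi, v, hv, hmeet⟩ := hcommon A hne
    have hpack :
        ¬∃ I ⊆ A.filter (v ∉ C ·), I.card = k ∧ (I : Set ι).PairwiseDisjoint C := by
      rintro ⟨I, hIA, rfl, hI⟩
      have hiI : i ∉ I := fun h => (Finset.mem_filter.mp (hIA h)).2 hv
      refine hA ⟨insert i I, Finset.insert_subset hi (hIA.trans (Finset.filter_subset _ _)),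
        Finset.card_insert_of_notMem hiI, ?_⟩
      rw [Finset.coe_insert]
      refine hI.insert fun j hj _ => ?_
      obtain ⟨hjA, hvj⟩ := Finset.mem_filter.mp (hIA hj)
      exact not_not.mp fun hij => hvj (hmeet j hjA hij)
    obtain ⟨S, hS, hhit⟩ := ih _ hpack
    refine ⟨insert v S, (S.card_insert_le v).trans_lt (by omega), fun j hj => ?_⟩
    by_cases hvj : v ∈ C j
    · exact ⟨v, S.mem_insert_self v, hvj⟩
    · obtain ⟨w, hw, hwj⟩ := hhit j (Finset.mem_filter.mpr ⟨hj, hvj⟩)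
      exact ⟨w, Finset.mem_insert_of_mem hw, hwj⟩

theorem stmt_5_general {V : Type} (T : SimpleGraph V)
    (hT : T.IsTree) (k : ℕ)
    (n : ℕ) (C : Fin n → Set V)
    (hsub : ∀ i, (T.induce (C i)).Connected)  -- the Cᵢ are subtrees of T
    -- no k of the subtrees are pairwise vertex-disjoint
    (hpack : ¬∃ I : Finset (Fin n), I.card = k ∧
      (I : Set (Fin n)).Pairwise fun i j => Disjoint (C i) (C j)) :
    -- a set of at most k-1 vertices meeting every Cᵢ
    ∃ S : Finset V, S.card ≤ k - 1 ∧ ∀ i, ∃ v ∈ S, v ∈ C i := by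
  obtain ⟨S, hS, hhit⟩ := exists_hitting_finset_of_not_exists_pairwiseDisjoint
    (fun _ hA => hT.exists_mem_forall_not_disjoint_imp_mem hsub hA) k Finset.univ
    fun ⟨I, _, hI⟩ => hpack ⟨I, hI⟩
  exact ⟨S, Nat.le_sub_one_of_lt hS, fun i => hhit i (Finset.mem_univ i)⟩

theorem stmt_5 {V : Type} [Fintype V] [DecidableEq V] (T : SimpleGraph V)
    (hT : T.IsTree) (k : ℕ) (hk : 0 < k) (hcard : k ≤ Fintype.card V)
    (n : ℕ) (C : Fin n → Set V)
    (hsub : ∀ i, (T.induce (C i)).Connected)  -- the Cᵢ are subtrees of T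
    -- no k of the subtrees are pairwise vertex-disjoint
    (hpack : ¬∃ I : Finset (Fin n), I.card = k ∧
      (I : Set (Fin n)).Pairwise fun i j => Disjoint (C i) (C j)) :
    -- a set of at most k-1 vertices meeting every Cᵢ
    ∃ S : Finset V, S.card ≤ k - 1 ∧ ∀ i, ∃ v ∈ S, v ∈ C i :=
  stmt_5_general T hT k n C hsub hpack
end

section
/- If X is a k-block of a graph G and x, y ∈ X are non-adjacent, then G contains k internally disjoint x-y-paths. -/
open SimpleGraph

/-- `(A, B)` is a separation of `G`. -/
def IsSeparation {V : Type} (G : SimpleGraph V) (A B : Set V) : Prop :=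
  A ∪ B = Set.univ ∧ ∀ u v : V, G.Adj u v → ¬(u ∈ A \ B ∧ v ∈ B \ A)

/-- `X` is not separated by any separation of order `< k`. -/
def Unseparated {V : Type} (G : SimpleGraph V) (k : ℕ) (X : Set V) : Prop :=
  ∀ A B : Set V, IsSeparation G A B → (A ∩ B).ncard < k → X ⊆ A ∨ X ⊆ B

/-- `X` is a `k`-block of `G`: a set of at least `k` vertices,
inclusion-maximal with the property that no separation of order `< k`
separates it. -/
def IsBlock {V : Type} (G : SimpleGraph V) (k : ℕ) (X : Set V) : Prop :=
  k ≤ X.ncard ∧ Unseparated G k X ∧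
    ∀ X' : Set V, X ⊆ X' → Unseparated G k X' → X' = X

/-!
Since `X` is not separated by fewer than `k` vertices, every set avoiding `x` and `y` that meets
all `x`–`y` walks has at least `k` elements: otherwise it would separate the vertices reachable
from `x` around it from the rest, with `x` and `y` on different sides. Menger's theorem, applied
between the neighbourhoods of `x` and `y` once all edges at `x` and `y` are removed, then gives
`k` disjoint walks, which extend to `k` internally disjoint `x`–`y` paths.

Menger's theorem is proved by induction on the number of edges (Diestel's first proof). For an
edge `uv`, either some `A`–`B` separator of size `k` contains both `u` and `v`, and linkages from
`A` and from `B` to it in `G - uv` are glued along it; or contracting `uv` leaves every separator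
of size at least `k`, and a linkage of the contracted graph lifts to `G`.
-/

namespace SimpleGraph

variable {V W : Type*} {G : SimpleGraph V}

def Separates (G : SimpleGraph V) (A B S : Set V) : Prop :=
  ∀ ⦃a b : V⦄ (w : G.Walk a b), a ∈ A → b ∈ B → ∃ v ∈ w.support, v ∈ S

def HasDisjointWalks (G : SimpleGraph V) (A B : Set V) (k : ℕ) : Prop :=
  ∃ (a b : Fin k → V) (w : ∀ i, G.Walk (a i) (b i)), (∀ i, a i ∈ A) ∧ (∀ i, b i ∈ B) ∧
    Pairwise fun i j => (w i).support.Disjoint (w j).support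

theorem Separates.symm {A B S : Set V} (h : G.Separates A B S) : G.Separates B A S := by
  intro a b w ha hb
  obtain ⟨v, hv, hvS⟩ := h w.reverse hb ha
  exact ⟨v, by simpa using hv, hvS⟩

theorem HasDisjointWalks.mono {H : SimpleGraph V} {A B : Set V} {k : ℕ} (hGH : G ≤ H)
    (h : G.HasDisjointWalks A B k) : H.HasDisjointWalks A B k := by
  obtain ⟨a, b, w, ha, hb, hw⟩ := h
  refine ⟨a, b, fun i => (w i).mapLe hGH, ha, hb, fun i j hij => ?_⟩
  simpa only [Walk.support_mapLe_eq_support] using hw hij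

theorem separates_inter_of_edgeSet_eq_empty (hE : G.edgeSet = ∅) (A B : Set V) :
    G.Separates A B (A ∩ B) := by
  rintro a b (_ | ⟨h, _⟩) ha hb
  · exact ⟨a, by simp, ha, hb⟩
  · exact absurd (hE ▸ G.mem_edgeSet.mpr h) (Set.notMem_empty _)

theorem hasDisjointWalks_of_le_ncard_inter [Finite V] {A B : Set V} {k : ℕ}
    (h : k ≤ (A ∩ B).ncard) : G.HasDisjointWalks A B k := by
  obtain ⟨T, hT, rfl⟩ := Set.exists_subset_card_eq h
  obtain ⟨e⟩ : Nonempty (Fin T.ncard ≃ T) := Finite.card_eq.mp (by simp [Nat.card_coe_set_eq])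
  refine ⟨fun i => e i, fun i => e i, fun i => .nil, fun i => (hT (e i).2).1,
    fun i => (hT (e i).2).2, fun i j hij => ?_⟩
  simpa [Subtype.val_inj] using (e.injective.ne hij).symm

theorem Walk.exists_prefix_to_set (Y : Set V) {a b : V} (w : G.Walk a b)
    (hw : ∃ v ∈ w.support, v ∈ Y) :
    ∃ u ∈ Y, ∃ p : G.Walk a u, p.support ⊆ w.support ∧ (∀ v ∈ p.support, v ∈ Y → v = u) ∧
      ∀ v ∈ p.support, v ∉ Y → ∃ q : G.Walk a v, ∀ z ∈ q.support, z ∉ Y := by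
  induction w with
  | nil =>
    obtain ⟨v, hv, hvY⟩ := hw
    rw [Walk.support_nil, List.mem_singleton] at hv
    subst hv
    exact ⟨v, hvY, .nil, by simp, by simp, by simp_all⟩
  | @cons a c b h p ih =>
    by_cases haY : a ∈ Y
    · exact ⟨a, haY, .nil, by simp, by simp, by simp_all⟩
    obtain ⟨u, huY, p', hsub, honly, havoid⟩ := ih (by simpa [haY] using hw)
    refine ⟨u, huY, .cons h p', List.cons_subset_cons _ hsub, ?_, ?_⟩
    · simp only [Walk.support_cons, List.mem_cons, forall_eq_or_imp]
      exact ⟨fun h => absurd h haY, honly⟩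
    · simp only [Walk.support_cons, List.mem_cons, forall_eq_or_imp]
      refine ⟨fun _ => ⟨.nil, by simpa using haY⟩, fun v hv hvY => ?_⟩
      obtain ⟨q, hq⟩ := havoid v hv hvY
      exact ⟨.cons h q, by simpa [haY] using hq⟩

theorem HasDisjointWalks.exists_trim [Finite V] {A Y : Set V} {k : ℕ}
    (h : G.HasDisjointWalks A Y k) (hY : Y.ncard ≤ k) :
    ∃ (a : Fin k → V) (e : Fin k ≃ Y) (p : ∀ i, G.Walk (a i) (e i)), (∀ i, a i ∈ A) ∧
      (Pairwise fun i j => (p i).support.Disjoint (p j).support) ∧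
      (∀ i, ∀ v ∈ (p i).support, v ∈ Y → v = e i) ∧
      ∀ i, ∀ v ∈ (p i).support, v ∉ Y → ∃ a' ∈ A, ∃ q : G.Walk a' v, ∀ z ∈ q.support, z ∉ Y := by
  obtain ⟨a, b, w, ha, hb, hw⟩ := h
  choose u huY p hsub honly havoid using
    fun i => (w i).exists_prefix_to_set Y ⟨b i, (w i).end_mem_support, hb i⟩
  have hbij : Function.Bijective fun i => (⟨u i, huY i⟩ : Y) := by
    refine Function.Injective.bijective_of_nat_card_le (fun i j hij => ?_) ?_
    · by_contra hne
      have huij : u i = u j := congrArg Subtype.val hij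
      exact hw hne (hsub i (p i).end_mem_support) (huij ▸ hsub j (p j).end_mem_support)
    · simpa [Nat.card_coe_set_eq] using hY
  refine ⟨a, .ofBijective _ hbij, p, ha, fun i j hij v hvi hvj => hw hij (hsub i hvi) (hsub j hvj),
    honly, fun i v hv hvY => ⟨a i, ha i, havoid i v hv hvY⟩⟩

theorem Separates.hasDisjointWalks_of_hasDisjointWalks [Finite V] {A B Y : Set V} {k : ℕ}
    (hY : G.Separates A B Y) (hYk : Y.ncard ≤ k)
    (hA : G.HasDisjointWalks A Y k) (hB : G.HasDisjointWalks B Y k) :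
    G.HasDisjointWalks A B k := by
  obtain ⟨a, eA, p, ha, hpd, hpY, hpA⟩ := hA.exists_trim hYk
  obtain ⟨b, eB, q, hb, hqd, hqY, hqB⟩ := hB.exists_trim hYk
  set σ := eA.trans eB.symm
  have hσ : ∀ i, (eB (σ i) : V) = eA i := by simp [σ]
  have cross : ∀ i j, ∀ v ∈ (p i).support, v ∈ (q (σ j)).support → i = j := by
    intro i j v hvp hvq
    by_cases hvY : v ∈ Y
    · apply eA.injective
      ext
      rw [← hpY i v hvp hvY, ← hσ, ← hqY _ v hvq hvY]
    · obtain ⟨a', ha', r, hr⟩ := hpA i v hvp hvY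
      obtain ⟨b', hb', s, hs⟩ := hqB _ v hvq hvY
      obtain ⟨z, hz, hzY⟩ := hY (r.append s.reverse) ha' hb'
      rw [Walk.mem_support_append_iff, Walk.support_reverse, List.mem_reverse] at hz
      exact (hz.elim (hr z) (hs z) hzY).elim
  refine ⟨a, b ∘ σ, fun i => (p i).append ((q (σ i)).reverse.copy (hσ i) rfl), ha,
    fun i => hb _, fun i j hij v hvi hvj => ?_⟩
  simp only [Walk.mem_support_append_iff, Walk.support_copy, Walk.support_reverse,
    List.mem_reverse] at hvi hvj
  rcases hvi with hvi | hvi <;> rcases hvj with hvj | hvj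
  · exact hpd hij hvi hvj
  · exact hij (cross i j v hvi hvj)
  · exact hij (cross j i v hvj hvi).symm
  · exact hqd (σ.injective.ne hij) hvi hvj

theorem Separates.of_separates_deleteEdges {A B Y T : Set V} {x y : V} (hxy : x ≠ y)
    (hY : G.Separates A B Y) (hx : x ∈ Y) (hy : y ∈ Y)
    (hT : (G.deleteEdges {s(x, y)}).Separates A Y T) : G.Separates A B T := by
  intro a b w ha hb
  obtain ⟨u, huY, p, hsub, honly, -⟩ := w.exists_prefix_to_set Y (hY w ha hb)
  have hp : s(x, y) ∉ p.edges := fun he => hxy <|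
    (honly x (p.fst_mem_support_of_mem_edges he) hx).trans
      (honly y (p.snd_mem_support_of_mem_edges he) hy).symm
  obtain ⟨v, hv, hvT⟩ := hT (p.toDeleteEdge _ hp) ha huY
  exact ⟨v, hsub (by simpa using hv), hvT⟩

theorem Walk.exists_walk_map (f : V → W) {u v : V} (p : G.Walk u v) :
    ∃ q : (G.map f).Walk (f u) (f v), q.support ⊆ p.support.map f := by
  induction p with
  | nil => exact ⟨.nil, by simp⟩
  | @cons u c v h p ih =>
    obtain ⟨q, hq⟩ := ih
    by_cases huc : f u = f c
    · refine ⟨q.copy huc.symm rfl, ?_⟩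
      rw [Walk.support_copy]
      exact List.Subset.trans hq (List.subset_cons_self _ _)
    · exact ⟨.cons (map_adj_apply' h huc) q, by simpa using List.subset_cons_of_subset _ hq⟩

theorem Walk.exists_lift_of_map {f : V → W}
    (hfib : ∀ u v, f u = f v → ∃ p : G.Walk u v, ∀ z ∈ p.support, f z = f v)
    {a b : W} (q : (G.map f).Walk a b) (u v : V) (hu : f u = a) (hv : f v = b) :
    ∃ p : G.Walk u v, ∀ z ∈ p.support, f z ∈ q.support := by
  induction q generalizing u with
  | nil =>
    obtain ⟨p, hp⟩ := hfib u v (hu.trans hv.symm)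
    exact ⟨p, fun z hz => by simp [hp z hz, hv]⟩
  | @cons a c b hac q ih =>
    obtain ⟨-, a', c', hG, ha', hc'⟩ := id hac
    obtain ⟨r, hr⟩ := hfib u a' (hu.trans ha'.symm)
    obtain ⟨p, hp⟩ := ih c' hc' hv
    refine ⟨r.append (.cons hG p), fun z hz => ?_⟩
    rw [Walk.support_cons, List.mem_cons]
    rw [Walk.mem_support_append_iff, Walk.support_cons, List.mem_cons] at hz
    rcases hz with hz | rfl | hz
    exacts [.inl ((hr z hz).trans ha'), .inl ha', .inr (hp z hz)]

theorem ncard_edgeSet_map_lt [Finite V] (f : V → W) {x y : V} (hxy : G.Adj x y)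
    (hf : f x = f y) :
    (G.map f).edgeSet.ncard < G.edgeSet.ncard := by
  have hsub : (G.map f).edgeSet ⊆ Sym2.map f '' (G.edgeSet \ {s(x, y)}) := by
    intro e he
    induction e using Sym2.ind with
    | _ a b =>
      obtain ⟨hab, a', b', hG, rfl, rfl⟩ := he
      refine ⟨s(a', b'), ⟨hG, fun hxy' => hab ?_⟩, rfl⟩
      rcases Sym2.eq_iff.mp hxy' with ⟨rfl, rfl⟩ | ⟨rfl, rfl⟩
      exacts [hf, hf.symm]
  calc (G.map f).edgeSet.ncard
      ≤ (Sym2.map f '' (G.edgeSet \ {s(x, y)})).ncard := Set.ncard_le_ncard hsub (Set.toFinite _)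
    _ ≤ (G.edgeSet \ {s(x, y)}).ncard := Set.ncard_image_le (Set.toFinite _)
    _ < G.edgeSet.ncard := Set.ncard_sdiff_singleton_lt_of_mem hxy (Set.toFinite _)

theorem Separates.preimage_of_map {f : V → W} {A B : Set V} {Z : Set W}
    (hZ : (G.map f).Separates (f '' A) (f '' B) Z) : G.Separates A B (f ⁻¹' Z) := by
  intro a b w ha hb
  obtain ⟨q, hq⟩ := w.exists_walk_map f
  obtain ⟨z, hz, hzZ⟩ := hZ q ⟨a, ha, rfl⟩ ⟨b, hb, rfl⟩
  obtain ⟨t, ht, rfl⟩ := List.mem_map.mp (hq hz)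
  exact ⟨t, ht, hzZ⟩

theorem HasDisjointWalks.of_map {f : V → W}
    (hfib : ∀ u v, f u = f v → ∃ p : G.Walk u v, ∀ z ∈ p.support, f z = f v)
    {A B : Set V} {k : ℕ} (h : (G.map f).HasDisjointWalks (f '' A) (f '' B) k) :
    G.HasDisjointWalks A B k := by
  obtain ⟨a, b, w, ha, hb, hw⟩ := h
  choose a' ha' hfa using ha
  choose b' hb' hfb using hb
  choose p hp using fun i => (w i).exists_lift_of_map hfib (a' i) (b' i) (hfa i) (hfb i)
  exact ⟨a', b', p, ha', hb', fun i j hij v hvi hvj => hw hij (hp i v hvi) (hp j v hvj)⟩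

-- `Function.update id y x` merges `y` into `x`, so `G.map` along it contracts the edge `xy`.
theorem exists_walk_of_update_eq [DecidableEq V] {x y : V} (hxy : G.Adj x y) (u v : V)
    (huv : Function.update id y x u = Function.update id y x v) :
    ∃ p : G.Walk u v, ∀ z ∈ p.support, Function.update id y x z = Function.update id y x v := by
  rcases eq_or_ne u v with rfl | hne
  · exact ⟨.nil, by simp⟩
  have hadj : G.Adj u v := by
    by_cases hu : u = y <;> by_cases hv : v = y <;> simp_all [G.adj_comm]
  exact ⟨.cons hadj .nil, by simp [huv]⟩

theorem le_ncard_of_separates_map_update [Finite V] [DecidableEq V] {A B Z : Set V} {k : ℕ}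
    {x y : V} (hxy : x ≠ y) (h : ∀ S, G.Separates A B S → k ≤ S.ncard)
    (hxyS : ∀ S, G.Separates A B S → x ∈ S → y ∈ S → k < S.ncard)
    (hZ : (G.map (Function.update id y x)).Separates
      (Function.update id y x '' A) (Function.update id y x '' B) Z) :
    k ≤ Z.ncard := by
  have hP := hZ.preimage_of_map
  by_cases hxZ : x ∈ Z
  · have hsub : Function.update id y x ⁻¹' Z ⊆ insert y Z := by
      intro v hv
      by_cases hvy : v = y
      · exact .inl hvy
      · exact .inr (by simpa [Function.update_of_ne hvy] using hv)
    have hlt := hxyS _ hP (by simpa [Function.update_of_ne hxy] using hxZ) (by simpa using hxZ)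
    have := Set.ncard_le_ncard hsub (Set.toFinite _)
    have := Set.ncard_insert_le y Z
    omega
  · have hsub : Function.update id y x ⁻¹' Z ⊆ Z := by
      intro v hv
      by_cases hvy : v = y
      · subst hvy
        exact absurd (by simpa using hv) hxZ
      · simpa [Function.update_of_ne hvy] using hv
    exact (h _ hP).trans (Set.ncard_le_ncard hsub (Set.toFinite _))

theorem menger [Finite V] {A B : Set V} {k : ℕ} (h : ∀ S, G.Separates A B S → k ≤ S.ncard) :
    G.HasDisjointWalks A B k := by
  induction hn : G.edgeSet.ncard using Nat.strong_induction_on generalizing G A B with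
  | _ n ih =>
    subst hn
    by_cases hE : G.edgeSet = ∅
    · exact hasDisjointWalks_of_le_ncard_inter (h _ (separates_inter_of_edgeSet_eq_empty hE A B))
    obtain ⟨x, y, hxy⟩ : ∃ x y, G.Adj x y := by
      simpa [Set.eq_empty_iff_forall_notMem, Sym2.forall] using hE
    by_cases hsmall : ∃ Y, G.Separates A B Y ∧ x ∈ Y ∧ y ∈ Y ∧ Y.ncard ≤ k
    · obtain ⟨Y, hY, hx, hy, hYk⟩ := hsmall
      have hlt : (G.deleteEdges {s(x, y)}).edgeSet.ncard < G.edgeSet.ncard := by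
        rw [edgeSet_deleteEdges]
        exact Set.ncard_sdiff_singleton_lt_of_mem hxy (Set.toFinite _)
      refine hY.hasDisjointWalks_of_hasDisjointWalks hYk ?_ ?_ <;>
        refine (ih _ hlt (fun T hT => h T ?_) rfl).mono (deleteEdges_le _)
      · exact hY.of_separates_deleteEdges hxy.ne hx hy hT
      · exact (hY.symm.of_separates_deleteEdges hxy.ne hx hy hT).symm
    · push Not at hsmall
      classical
      refine HasDisjointWalks.of_map (exists_walk_of_update_eq hxy) (ih _ ?_ ?_ rfl)
      · exact ncard_edgeSet_map_lt _ hxy (by simp [Function.update_of_ne hxy.ne])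
      · exact fun Z hZ => le_ncard_of_separates_map_update hxy.ne h hsmall hZ

theorem Walk.IsPath.exists_inner_walk {x y : V} (hxy : x ≠ y) (hnadj : ¬G.Adj x y)
    {p : G.Walk x y} (hp : p.IsPath) :
    ∃ (c d : V) (m : G.Walk c d), G.Adj x c ∧ G.Adj y d ∧
      ∀ v ∈ m.support, v ∈ p.support ∧ v ≠ x ∧ v ≠ y := by
  obtain ⟨c, hxc, q, rfl⟩ := Walk.exists_eq_cons_of_ne hxy p
  rw [Walk.cons_isPath_iff] at hp
  have hcy : c ≠ y := by rintro rfl; exact hnadj hxc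
  obtain ⟨d, hyd, m, hm⟩ := Walk.exists_eq_cons_of_ne hcy.symm q.reverse
  have hqr := hp.1.reverse
  rw [hm, Walk.cons_isPath_iff] at hqr
  refine ⟨c, d, m.reverse, hxc, hyd, fun v hv => ?_⟩
  rw [Walk.support_reverse, List.mem_reverse] at hv
  have hvq : v ∈ q.support := by
    rw [← List.mem_reverse, ← Walk.support_reverse, hm, Walk.support_cons]
    exact List.mem_cons_of_mem _ hv
  refine ⟨List.mem_cons_of_mem _ hvq, ?_, ?_⟩
  · rintro rfl; exact hp.2 hvq
  · rintro rfl; exact hqr.2 hv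

theorem separates_of_separates_neighborSet {x y : V} (hxy : x ≠ y) (hnadj : ¬G.Adj x y)
    {S : Set V}
    (hS : ((G.deleteIncidenceSet x).deleteIncidenceSet y).Separates
      (G.neighborSet x) (G.neighborSet y) S) :
    G.Separates {x} {y} (S \ {x, y}) := by
  classical
  intro a b w ha hb
  rw [Set.mem_singleton_iff] at ha hb
  subst a b
  obtain ⟨c, d, m, hxc, hyd, hm⟩ := w.bypass_isPath.exists_inner_walk hxy hnadj
  have hedges : ∀ e ∈ m.edges, e ∈ ((G.deleteIncidenceSet x).deleteIncidenceSet y).edgeSet := by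
    intro e he
    induction e using Sym2.ind with
    | _ u v =>
      have hu := hm u (m.fst_mem_support_of_mem_edges he)
      have hv := hm v (m.snd_mem_support_of_mem_edges he)
      simp only [mem_edgeSet, deleteIncidenceSet_adj]
      exact ⟨⟨m.edges_subset_edgeSet he, hu.2.1, hv.2.1⟩, hu.2.2, hv.2.2⟩
  obtain ⟨v, hv, hvS⟩ := hS (m.transfer _ hedges) hxc hyd
  rw [Walk.support_transfer] at hv
  obtain ⟨hvw, hvx, hvy⟩ := hm v hv
  exact ⟨v, w.support_bypass_subset_support hvw, hvS, by simp [hvx, hvy]⟩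

theorem exists_internally_disjoint_paths_of_hasDisjointWalks {x y : V} {k : ℕ}
    (h : ((G.deleteIncidenceSet x).deleteIncidenceSet y).HasDisjointWalks
      (G.neighborSet x) (G.neighborSet y) k) :
    ∃ P : Fin k → G.Walk x y, (∀ i, (P i).IsPath) ∧
      ∀ i j : Fin k, i ≠ j → ∀ v : V, v ∈ (P i).support → v ∈ (P j).support → v = x ∨ v = y := by
  classical
  obtain ⟨a, b, w, ha, hb, hw⟩ := h
  have hle : (G.deleteIncidenceSet x).deleteIncidenceSet y ≤ G :=
    (deleteIncidenceSet_le _ y).trans (deleteIncidenceSet_le G x)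
  have hxa : ∀ i, G.Adj x (a i) := ha
  have hby : ∀ i, G.Adj (b i) y := fun i => (hb i).symm
  let P i : G.Walk x y := (Walk.cons (hxa i) (((w i).mapLe hle).concat (hby i))).bypass
  have hP : ∀ i, ∀ v ∈ (P i).support, v ≠ x → v ≠ y → v ∈ (w i).support := by
    intro i v hv hvx hvy
    have := Walk.support_bypass_subset_support _ hv
    simp only [Walk.support_cons, Walk.support_concat, Walk.support_mapLe_eq_support,
      List.mem_cons, List.mem_append] at this
    tauto
  refine ⟨P, fun i => Walk.bypass_isPath _, fun i j hij v hvi hvj => ?_⟩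
  by_contra! hv
  exact hw hij (hP i v hvi hv.1 hv.2) (hP j v hvj hv.1 hv.2)

end SimpleGraph

theorem Unseparated.le_ncard_of_separates {V : Type} {G : SimpleGraph V} {k : ℕ} {X S : Set V}
    {x y : V} (hX : Unseparated G k X) (hx : x ∈ X) (hy : y ∈ X) (hxS : x ∉ S) (hyS : y ∉ S)
    (hS : G.Separates {x} {y} S) : k ≤ S.ncard := by
  by_contra! hlt
  set R := {v | ∃ w : G.Walk x v, ∀ z ∈ w.support, z ∉ S}
  have hxR : x ∈ R := ⟨.nil, by simpa using hxS⟩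
  have hyR : y ∉ R := fun ⟨w, hw⟩ => by
    obtain ⟨v, hv, hvS⟩ := hS w rfl rfl
    exact hw v hv hvS
  have hsep : IsSeparation G (R ∪ S) (Rᶜ ∪ S) := by
    refine ⟨Set.eq_univ_of_forall fun v => by by_cases v ∈ R <;> simp [*], ?_⟩
    rintro u v huv ⟨⟨⟨w, hw⟩ | hu, hu'⟩, -, hv⟩
    · simp only [Set.mem_union, not_or] at hv
      refine hv.1 ⟨w.concat huv, fun z hz => ?_⟩
      rw [Walk.support_concat, List.mem_append, List.mem_singleton] at hz
      exact hz.elim (hw z) fun hzv => hzv ▸ hv.2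
    · exact hu' (.inr hu)
  have hinter : (R ∪ S) ∩ (Rᶜ ∪ S) = S := by
    ext v
    simp only [Set.mem_inter_iff, Set.mem_union, Set.mem_compl_iff]
    tauto
  rcases hX _ _ hsep (by rwa [hinter]) with hsub | hsub
  · exact (hsub hy).elim hyR hyS
  · exact (hsub hx).elim (· hxR) hxS

theorem stmt_8_general {V : Type} [Fintype V] (G : SimpleGraph V) (k : ℕ)
    (X : Set V) (hX : IsBlock G k X)
    (x y : V) (hx : x ∈ X) (hy : y ∈ X) (hxy : x ≠ y) (hnadj : ¬G.Adj x y) :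
    -- k internally disjoint x-y-paths
    ∃ P : Fin k → G.Walk x y,
      (∀ i, (P i).IsPath) ∧
      ∀ i j : Fin k, i ≠ j → ∀ v : V,
        v ∈ (P i).support → v ∈ (P j).support → v = x ∨ v = y := by
  refine exists_internally_disjoint_paths_of_hasDisjointWalks (menger fun S hS => ?_)
  calc k ≤ (S \ {x, y}).ncard :=
        hX.2.1.le_ncard_of_separates hx hy (by simp) (by simp)
          (separates_of_separates_neighborSet hxy hnadj hS)
    _ ≤ S.ncard := Set.ncard_le_ncard Set.sdiff_subset (Set.toFinite _)

theorem stmt_8 {V : Type} [Fintype V] (G : SimpleGraph V) (k : ℕ) (hk : 0 < k)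
    (X : Set V) (hX : IsBlock G k X)
    (x y : V) (hx : x ∈ X) (hy : y ∈ X) (hxy : x ≠ y) (hnadj : ¬G.Adj x y) :
    -- k internally disjoint x-y-paths
    ∃ P : Fin k → G.Walk x y,
      (∀ i, (P i).IsPath) ∧
      ∀ i j : Fin k, i ≠ j → ∀ v : V,
        v ∈ (P i).support → v ∈ (P j).support → v = x ∨ v = y :=
  stmt_8_general G k X hX x y hx hy hxy hnadj
end

section
/- Let ℓ ≥ 4. Suppose G is ℓ-chordal and P, Q are internally disjoint induced x-y-paths each of length greater than ℓ/2. Choose internal vertices v ∈ P and w ∈ Q with vw ∈ E(G) minimizing the length of the cycle D = x P v w Q x. Then D is an induced cycle of G, hence has length at most ℓ; in particular the segment of P from x to v has length at most ℓ − 2. -/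
/-!
By the minimality of `vw`, the only edge between the interiors of `x P v` and `x Q w` is `vw`:
for any other such edge `ab`, `a` lies strictly before `v` on `P` or `b` strictly before `w` on
`Q`, which gives a shorter cycle of the same shape. As `P` and `Q` are induced and meet only at
their ends, `D` is then an induced cycle, so `|D| ≤ ℓ` by chordality; and `D` spends at least
one edge on `Q` besides `vw`, whence `|x P v| ≤ ℓ - 2`.
-/

open SimpleGraph

/-- The cycle `x P v w Q x` formed from initial segments of `P` and `Q`
together with the chord `vw`. -/
def cycD {V : Type} [DecidableEq V] {G : SimpleGraph V} {x y v w : V}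
    (P Q : G.Walk x y) (hv : v ∈ P.support) (hw : w ∈ Q.support)
    (hadj : G.Adj v w) : G.Walk x x :=
  (P.takeUntil v hv).append (Walk.cons hadj ((Q.takeUntil w hw).reverse))

namespace SimpleGraph.Walk

variable {V : Type} {G : SimpleGraph V}

theorem isCycle_append_cons_reverse {x v w : V} {p : G.Walk x v} {q : G.Walk x w}
    (hp : p.IsPath) (hq : q.IsPath) (hpq : ∀ c ∈ p.support, c ∈ q.support → c = x)
    (hvx : v ≠ x) (hwx : w ≠ x) (hadj : G.Adj v w) :
    (p.append (cons hadj q.reverse)).IsCycle := by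
  have hvq : v ∉ q.reverse.support := fun h =>
    hvx (hpq v p.end_mem_support (by simpa using h))
  refine hp.isCycle_append (hq.reverse.cons hvq) (fun c hcp hcq => ?_) (Or.inr ?_)
  · have hcx : c = x := hpq c (List.mem_of_mem_tail hcp) (by simpa using hcq)
    have hnodup := hp.support_nodup
    rw [← cons_tail_support, List.nodup_cons] at hnodup
    exact hnodup.1 (hcx ▸ hcp)
  · have : q.length ≠ 0 := fun h => hwx (eq_of_length_eq_zero h).symm
    simp only [length_cons, length_reverse]
    omega

theorem walkInduced_append_cons_reverse {x v w : V} {p : G.Walk x v} {q : G.Walk x w}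
    (hp : WalkInduced p) (hq : WalkInduced q) (hadj : G.Adj v w)
    (hcross : ∀ a b, a ∈ p.support → b ∈ q.support → a ≠ x → b ≠ x → G.Adj a b →
      a = v ∧ b = w) :
    WalkInduced (p.append (cons hadj q.reverse)) := by
  have hedges :
      (p.append (cons hadj q.reverse)).edges = p.edges ++ s(v, w) :: q.edges.reverse := by
    simp [edges_append, edges_reverse]
  have mixed : ∀ a b, a ∈ p.support → b ∈ q.support → G.Adj a b →
      s(a, b) ∈ (p.append (cons hadj q.reverse)).edges := by
    intro a b ha hb hab
    rw [hedges, List.mem_append, List.mem_cons, List.mem_reverse]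
    by_cases hax : a = x
    · subst hax
      exact Or.inr (Or.inr (hq a b q.start_mem_support hb hab))
    by_cases hbx : b = x
    · subst hbx
      exact Or.inl (hp a b ha p.start_mem_support hab)
    obtain ⟨rfl, rfl⟩ := hcross a b ha hb hax hbx hab
    exact Or.inr (Or.inl rfl)
  intro a b ha hb hab
  have hsupp : (p.append (cons hadj q.reverse)).support = p.support ++ q.support.reverse := by
    simp [support_append, support_reverse]
  rw [hsupp, List.mem_append, List.mem_reverse] at ha hb
  rcases ha with ha | ha <;> rcases hb with hb | hb
  · rw [hedges]
    exact List.mem_append_left _ (hp a b ha hb hab)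
  · exact mixed a b ha hb hab
  · exact Sym2.eq_swap ▸ mixed b a hb ha hab.symm
  · rw [hedges]
    exact List.mem_append_right _
      (List.mem_cons_of_mem _ (List.mem_reverse.mpr (hq a b ha hb hab)))

variable [DecidableEq V]

theorem eq_of_length_takeUntil_le {x y u a : V} {p : G.Walk x y} (hu : u ∈ p.support)
    (ha : a ∈ (p.takeUntil u hu).support)
    (hle : (p.takeUntil u hu).length
      ≤ (p.takeUntil a (p.support_takeUntil_subset_support hu ha)).length) :
    a = u := by
  by_contra hne
  have := length_takeUntil_lt_length ha hne
  rw [takeUntil_takeUntil] at this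
  omega

theorem length_takeUntil_le_of_mem_takeUntil {x y u a : V} {p : G.Walk x y}
    (hu : u ∈ p.support) (ha : a ∈ (p.takeUntil u hu).support) :
    (p.takeUntil a (p.support_takeUntil_subset_support hu ha)).length
      ≤ (p.takeUntil u hu).length := by
  rw [← takeUntil_takeUntil _ hu ha]
  exact length_takeUntil_le_length _ _

end SimpleGraph.Walk

open SimpleGraph.Walk

section

variable {V : Type} [DecidableEq V] {G : SimpleGraph V}

theorem WalkInduced.takeUntil {x y u : V} {p : G.Walk x y} (hp : p.IsPath)
    (hind : WalkInduced p) (hu : u ∈ p.support) : WalkInduced (p.takeUntil u hu) := by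
  intro a b ha hb hab
  have hsub := p.support_takeUntil_subset_support hu
  have he := hind a b (hsub ha) (hsub hb) hab
  rw [← p.take_spec hu, edges_append, List.mem_append] at he
  refine he.resolve_right fun he => hab.ne ?_
  have hpath : ((p.takeUntil u hu).append (p.dropUntil u hu)).IsPath := by
    rwa [p.take_spec hu]
  -- an edge of the rest of the path with both ends in the initial segment would be a loop at `u`
  have eq_u : ∀ c ∈ (p.takeUntil u hu).support, c ∈ (p.dropUntil u hu).support → c = u :=
    fun c hc hc' => by_contra fun hcu => hpath.ne_of_mem_support_of_append hcu hc hc' rfl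
  exact (eq_u a ha (fst_mem_support_of_mem_edges _ he)).trans
    (eq_u b hb (snd_mem_support_of_mem_edges _ he)).symm

theorem length_cycD {x y v w : V} (P Q : G.Walk x y) (hv : v ∈ P.support)
    (hw : w ∈ Q.support) (hadj : G.Adj v w) :
    (cycD P Q hv hw hadj).length = (P.takeUntil v hv).length + 1 + (Q.takeUntil w hw).length := by
  simp only [cycD, length_append, length_cons, length_reverse]
  omega

theorem eq_and_eq_of_forall_length_cycD_le {x y v w : V} {P Q : G.Walk x y}
    {hv : v ∈ P.support} {hw : w ∈ Q.support} {hadj : G.Adj v w}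
    (hmin : ∀ (v' w' : V) (hv' : v' ∈ P.support) (hw' : w' ∈ Q.support),
      v' ≠ x → v' ≠ y → w' ≠ x → w' ≠ y → ∀ hadj' : G.Adj v' w',
      (cycD P Q hv hw hadj).length ≤ (cycD P Q hv' hw' hadj').length)
    (hyP : y ∉ (P.takeUntil v hv).support) (hyQ : y ∉ (Q.takeUntil w hw).support)
    (a b : V) (ha : a ∈ (P.takeUntil v hv).support) (hb : b ∈ (Q.takeUntil w hw).support)
    (hax : a ≠ x) (hbx : b ≠ x) (hab : G.Adj a b) : a = v ∧ b = w := by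
  have hle := hmin a b (P.support_takeUntil_subset_support hv ha)
    (Q.support_takeUntil_subset_support hw hb) hax (by rintro rfl; exact hyP ha) hbx
    (by rintro rfl; exact hyQ hb) hab
  rw [length_cycD, length_cycD] at hle
  have hPa := length_takeUntil_le_of_mem_takeUntil hv ha
  have hQb := length_takeUntil_le_of_mem_takeUntil hw hb
  exact ⟨eq_of_length_takeUntil_le hv ha (by omega), eq_of_length_takeUntil_le hw hb (by omega)⟩

end

theorem stmt_9_general {V : Type} [DecidableEq V] (G : SimpleGraph V) (ℓ : ℕ)
    -- G is ℓ-chordal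
    (hG : ∀ (a : V) (C : G.Walk a a), C.IsCycle → WalkInduced C → C.length ≤ ℓ)
    (x y : V) (P Q : G.Walk x y)
    (hP : P.IsPath) (hQ : Q.IsPath)
    (hPind : WalkInduced P) (hQind : WalkInduced Q)
    (hdisj : ∀ z : V, z ∈ P.support → z ∈ Q.support → z = x ∨ z = y)
    (v w : V) (hv : v ∈ P.support) (hw : w ∈ Q.support)
    (hvx : v ≠ x) (hvy : v ≠ y) (hwx : w ≠ x) (hwy : w ≠ y)
    (hadj : G.Adj v w)
    -- (v, w) minimizes the length of the cycle D = x P v w Q x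
    (hmin : ∀ (v' w' : V) (hv' : v' ∈ P.support) (hw' : w' ∈ Q.support),
      v' ≠ x → v' ≠ y → w' ≠ x → w' ≠ y → ∀ hadj' : G.Adj v' w',
      (cycD P Q hv hw hadj).length ≤ (cycD P Q hv' hw' hadj').length) :
    -- then D is an induced cycle, has length at most ℓ,
    -- and the segment x P v has length at most ℓ - 2
    (cycD P Q hv hw hadj).IsCycle ∧
    WalkInduced (cycD P Q hv hw hadj) ∧
    (cycD P Q hv hw hadj).length ≤ ℓ ∧
    (P.takeUntil v hv).length ≤ ℓ - 2 := by
  have hyP := endpoint_notMem_support_takeUntil hP hv hvy.symm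
  have hyQ := endpoint_notMem_support_takeUntil hQ hw hwy.symm
  have hPQ : ∀ c ∈ (P.takeUntil v hv).support, c ∈ (Q.takeUntil w hw).support → c = x :=
    fun c hcP hcQ => (hdisj c (P.support_takeUntil_subset_support hv hcP)
      (Q.support_takeUntil_subset_support hw hcQ)).resolve_right (by rintro rfl; exact hyP hcP)
  have hcyc : (cycD P Q hv hw hadj).IsCycle :=
    isCycle_append_cons_reverse (hP.takeUntil hv) (hQ.takeUntil hw) hPQ hvx hwx hadj
  have hind : WalkInduced (cycD P Q hv hw hadj) :=
    walkInduced_append_cons_reverse (hPind.takeUntil hP hv) (hQind.takeUntil hQ hw) hadj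
      (eq_and_eq_of_forall_length_cycD_le hmin hyP hyQ)
  have hle := hG x _ hcyc hind
  refine ⟨hcyc, hind, hle, ?_⟩
  have hQw : (Q.takeUntil w hw).length ≠ 0 := fun h => hwx (eq_of_length_eq_zero h).symm
  have := length_cycD P Q hv hw hadj
  omega

theorem stmt_9 {V : Type} [DecidableEq V] (G : SimpleGraph V) (ℓ : ℕ) (hℓ : 4 ≤ ℓ)
    -- G is ℓ-chordal
    (hG : ∀ (a : V) (C : G.Walk a a), C.IsCycle → WalkInduced C → C.length ≤ ℓ)
    (x y : V) (P Q : G.Walk x y)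
    (hP : P.IsPath) (hQ : Q.IsPath)
    (hPind : WalkInduced P) (hQind : WalkInduced Q)
    (hdisj : ∀ z : V, z ∈ P.support → z ∈ Q.support → z = x ∨ z = y)
    (hPlen : ℓ < 2 * P.length) (hQlen : ℓ < 2 * Q.length)
    (v w : V) (hv : v ∈ P.support) (hw : w ∈ Q.support)
    (hvx : v ≠ x) (hvy : v ≠ y) (hwx : w ≠ x) (hwy : w ≠ y)
    (hadj : G.Adj v w)
    -- (v, w) minimizes the length of the cycle D = x P v w Q x
    (hmin : ∀ (v' w' : V) (hv' : v' ∈ P.support) (hw' : w' ∈ Q.support),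
      v' ≠ x → v' ≠ y → w' ≠ x → w' ≠ y → ∀ hadj' : G.Adj v' w',
      (cycD P Q hv hw hadj).length ≤ (cycD P Q hv' hw' hadj').length) :
    -- then D is an induced cycle, has length at most ℓ,
    -- and the segment x P v has length at most ℓ - 2
    (cycD P Q hv hw hadj).IsCycle ∧
    WalkInduced (cycD P Q hv hw hadj) ∧
    (cycD P Q hv hw hadj).length ≤ ℓ ∧
    (P.takeUntil v hv).length ≤ ℓ - 2 :=
  stmt_9_general G ℓ hG x y P Q hP hQ hPind hQind hdisj v w hv hw hvx hvy hwx hwy hadj hmin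
end

section
/- If (T,(V_t)) is a tree-decomposition of G and each torso H_t has a tree-decomposition of width less than w, then G has a tree-decomposition of width less than w. -/
open SimpleGraph

/-- `(T, bag)` is a tree-decomposition of `G`. -/
def IsTreeDecomp {V ι : Type} (G : SimpleGraph V) (T : SimpleGraph ι)
    (bag : ι → Finset V) : Prop :=
  T.IsTree ∧
  (∀ v : V, ∃ i, v ∈ bag i) ∧
  (∀ u v : V, G.Adj u v → ∃ i, u ∈ bag i ∧ v ∈ bag i) ∧
  (∀ v : V, (T.induce {i | v ∈ bag i}).Connected)

/-- The torso of a tree-decomposition at `t`. -/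
def torso {V ι : Type} (G : SimpleGraph V) (T : SimpleGraph ι)
    (bag : ι → Finset V) (t : ι) : SimpleGraph {v : V // v ∈ bag t} where
  Adj a b := a ≠ b ∧
    (G.Adj a.1 b.1 ∨ ∃ s : ι, T.Adj s t ∧ a.1 ∈ bag s ∧ b.1 ∈ bag s)
  symm := by
    constructor
    rintro a b ⟨hne, h | ⟨s, hs, ha, hb⟩⟩
    · exact ⟨hne.symm, Or.inl h.symm⟩
    · exact ⟨hne.symm, Or.inr ⟨s, hs, hb, ha⟩⟩
  loopless := by constructor; rintro a ⟨hne, -⟩; exact hne rfl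

/-!
Every edge `st` of `T` gives a clique `bag s ∩ bag t` in the torso at `t`, which by the Helly
property of subtrees lies in a single bag of the torso's decomposition, at a node `gate t s`.
Joining `gate s t` to `gate t s` for all edges `st` of `T` glues the decompositions of the torsos
into one tree; the bags containing a vertex `v` form a subtree because they do in each torso and
consecutive torsos along `T` share the gates. The glued graph is a tree since every edge is a
bridge: an edge between gates is the only edge over its edge of `T`, and an edge inside the part
of `t` stays a bridge under the retraction onto that part that sends every other part to the gate
of `t` pointing towards it.
-/

namespace SimpleGraph

variable {V W : Type*} {G : SimpleGraph V}

def IsPathConvex (G : SimpleGraph V) (A : Set V) : Prop :=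
  ∀ ⦃u v : V⦄, u ∈ A → v ∈ A → ∀ p : G.Walk u v, p.IsPath → ∀ x ∈ p.support, x ∈ A

theorem IsPathConvex.inter {A B : Set V} (hA : G.IsPathConvex A) (hB : G.IsPathConvex B) :
    G.IsPathConvex (A ∩ B) :=
  fun _ _ hu hv p hp x hx => ⟨hA hu.1 hv.1 p hp x hx, hB hu.2 hv.2 p hp x hx⟩

theorem IsAcyclic.isPathConvex (hG : G.IsAcyclic) {A : Set V}
    (hA : (G.induce A).Preconnected) : G.IsPathConvex A := by
  classical
  intro u v hu hv p hp x hx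
  obtain ⟨q⟩ := hA ⟨u, hu⟩ ⟨v, hv⟩
  let q' := q.map (Embedding.induce A).toHom
  have hpq : p = q'.bypass :=
    congrArg Subtype.val ((hG.subsingleton_path u v).elim ⟨p, hp⟩ ⟨_, q'.bypass_isPath⟩)
  have hx' := q'.support_bypass_subset_support (hpq ▸ hx)
  rw [Walk.support_map, List.mem_map] at hx'
  obtain ⟨y, -, rfl⟩ := hx'
  exact y.2

theorem IsTree.inter_inter_nonempty (hG : G.IsTree) {A B C : Set V} (hA : G.IsPathConvex A)
    (hB : G.IsPathConvex B) (hC : G.IsPathConvex C) (hAB : (A ∩ B).Nonempty)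
    (hBC : (B ∩ C).Nonempty) (hCA : (C ∩ A).Nonempty) : (A ∩ B ∩ C).Nonempty := by
  classical
  obtain ⟨c, hcA, hcB⟩ := hAB
  obtain ⟨a, haB, haC⟩ := hBC
  obtain ⟨b, hbC, hbA⟩ := hCA
  by_contra hABC
  have hABC' : ∀ x ∈ A, x ∈ B → x ∉ C := fun x h1 h2 h3 => hABC ⟨x, ⟨h1, h2⟩, h3⟩
  obtain ⟨q, hq⟩ := (hG.connected a c).exists_isPath
  obtain ⟨r, hr⟩ := (hG.connected c b).exists_isPath
  set p := (q.append r).bypass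
  have hpC : ∀ x ∈ p.support, x ∈ C := hC haC hbC p (Walk.bypass_isPath _)
  have hpBA : ∀ x ∈ p.support, x ∈ B ∨ x ∈ A := by
    intro x hx
    rcases (Walk.mem_support_append_iff _ _).mp
      ((q.append r).support_bypass_subset_support hx) with h | h
    · exact Or.inl (hB haB hcB q hq x h)
    · exact Or.inr (hA hcA hbA r hr x h)
  obtain ⟨d, hd, hxB, hyB⟩ :=
    p.exists_boundary_dart B haB fun hbB => hABC' b hbA hbB hbC
  have hxA : d.fst ∉ A := fun h => hABC' _ h hxB (hpC _ (p.dart_fst_mem_support_of_mem_darts hd))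
  have hyA : d.snd ∈ A := (hpBA _ (p.dart_snd_mem_support_of_mem_darts hd)).resolve_left hyB
  -- the paths from `c ∈ A ∩ B` to the ends of the edge `d` cannot both avoid the other end
  obtain ⟨px, hpx⟩ := (hG.connected c d.fst).exists_isPath
  obtain ⟨py, hpy⟩ := (hG.connected c d.snd).exists_isPath
  exact hyB (hB hcB hxB px hpx _ (hG.isAcyclic.mem_support_of_ne_mem_support_of_adj_of_isPath
    hpx hpy d.adj fun h => hxA (hA hcA hyA py hpy _ h)))

theorem IsTree.helly (hG : G.IsTree) {ι : Type*} {s : Finset ι}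
    (hs : s.Nonempty) {A : ι → Set V} (hA : ∀ i ∈ s, G.IsPathConvex (A i))
    (hAA : ∀ i ∈ s, ∀ j ∈ s, (A i ∩ A j).Nonempty) : ∃ x, ∀ i ∈ s, x ∈ A i := by
  classical
  induction hs using Finset.Nonempty.cons_induction generalizing A with
  | singleton a =>
    obtain ⟨x, hx, -⟩ := hAA a (Finset.mem_singleton_self a) a (Finset.mem_singleton_self a)
    exact ⟨x, by simpa using hx⟩
  | cons a s _ hs ih =>
    simp only [Finset.mem_cons, forall_eq_or_imp] at hA hAA ⊢
    obtain ⟨x, hx⟩ := ih (A := fun i => A i ∩ A a) (fun i hi => (hA.2 i hi).inter hA.1)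
      fun i hi j hj => by
        obtain ⟨x, ⟨hi, hj⟩, ha⟩ := hG.inter_inter_nonempty (hA.2 i hi) (hA.2 j hj) hA.1
          ((hAA.2 i hi).2 j hj) ((hAA.2 j hj).1) ((hAA.1).2 i hi)
        exact ⟨x, ⟨hi, ha⟩, ⟨hj, ha⟩⟩
    obtain ⟨i, hi⟩ := hs
    exact ⟨x, (hx i hi).2, fun j hj => (hx j hj).1⟩

theorem IsBridge.of_map {H : SimpleGraph W} (f : V → W) {x y : V}
    (hb : H.IsBridge s(f x, f y))
    (hf : ∀ u v, G.Adj u v → s(u, v) ≠ s(x, y) →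
      (H.deleteEdges {s(f x, f y)}).Reachable (f u) (f v)) :
    G.IsBridge s(x, y) := by
  rw [isBridge_iff] at hb ⊢
  rintro ⟨p⟩
  let D : Set V := {v | (H.deleteEdges {s(f x, f y)}).Reachable (f x) (f v)}
  obtain ⟨d, -, hd, hd'⟩ := p.exists_boundary_dart D (Reachable.refl _) hb
  have hadj := d.adj
  rw [deleteEdges_adj] at hadj
  exact hd' (hd.trans (hf _ _ hadj.1 hadj.2))

theorem Walk.snd_concat {u v w : V} {p : G.Walk u v} (hp : ¬p.Nil) (h : G.Adj v w) :
    (p.concat h).snd = p.snd := by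
  cases p with
  | nil => exact absurd Walk.Nil.nil hp
  | cons h' p => rw [Walk.concat_cons, Walk.snd_cons, Walk.snd_cons]

noncomputable def IsTree.firstStep (hG : G.IsTree) (u v : V) : V :=
  (hG.connected u v).exists_isPath.choose.snd

theorem IsTree.firstStep_eq_snd (hG : G.IsTree) {u v : V} {p : G.Walk u v} (hp : p.IsPath) :
    hG.firstStep u v = p.snd := by
  have hchoose := (hG.connected u v).exists_isPath.choose_spec
  exact congrArg (fun q : G.Path u v => (q : G.Walk u v).snd)
    ((hG.isAcyclic.subsingleton_path u v).elim ⟨_, hchoose⟩ ⟨p, hp⟩)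

theorem IsTree.firstStep_of_adj (hG : G.IsTree) {u v : V} (h : G.Adj u v) :
    hG.firstStep u v = v := by
  rw [hG.firstStep_eq_snd (Walk.IsPath.of_adj h)]
  rfl

theorem IsTree.firstStep_eq_of_adj (hG : G.IsTree) {u v w : V} (h : G.Adj v w) (hv : v ≠ u)
    (hw : w ≠ u) : hG.firstStep u v = hG.firstStep u w := by
  obtain ⟨p, hp⟩ := (hG.connected u v).exists_isPath
  obtain ⟨q, hq⟩ := (hG.connected u w).exists_isPath
  wlog hwp : w ∈ p.support generalizing v w p q
  · exact (this h.symm hw hv q hq p hp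
      (hG.isAcyclic.mem_support_of_ne_mem_support_of_adj_of_isPath hq hp h.symm hwp)).symm
  have hpq := hG.isAcyclic.path_concat hq hp h.symm hwp
  rw [hG.firstStep_eq_snd hp, hG.firstStep_eq_snd hq, hpq,
    Walk.snd_concat (Walk.not_nil_of_ne hw.symm)]

section Glue

variable {ι : Type*} {κ : ι → Type*} (T : SimpleGraph ι) (S : ∀ t, SimpleGraph (κ t))
  (gate : ∀ t, ι → κ t)

inductive GlueAdj : (Σ t, κ t) → (Σ t, κ t) → Prop
  | inner {t : ι} {a b : κ t} : (S t).Adj a b → GlueAdj ⟨t, a⟩ ⟨t, b⟩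
  | link {r r' : ι} : T.Adj r r' → GlueAdj ⟨r, gate r r'⟩ ⟨r', gate r' r⟩

def glue : SimpleGraph (Σ t, κ t) where
  Adj := GlueAdj T S gate
  symm := ⟨fun _ _ h => by
    cases h with
    | inner h => exact .inner h.symm
    | link h => exact .link h.symm⟩
  loopless := ⟨fun _ h => by
    cases h with
    | inner h => exact h.ne rfl
    | link h => exact h.ne rfl⟩

variable {T S gate}

theorem preconnected_induce_glue {X : Set (Σ t, κ t)} {I : Set ι} (hX : ∀ x ∈ X, x.1 ∈ I)
    (hI : (T.induce I).Preconnected)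
    (hfib : ∀ t ∈ I, ((S t).induce {k | ⟨t, k⟩ ∈ X}).Preconnected)
    (hgate : ∀ r r', r ∈ I → r' ∈ I → T.Adj r r' → ⟨r, gate r r'⟩ ∈ X) :
    ((glue T S gate).induce X).Preconnected := by
  have within (t : ι) (k k' : κ t) (hk : ⟨t, k⟩ ∈ X) (hk' : ⟨t, k'⟩ ∈ X) :
      ((glue T S gate).induce X).Reachable ⟨_, hk⟩ ⟨_, hk'⟩ :=
    let f : (S t).induce {k | ⟨t, k⟩ ∈ X} →g (glue T S gate).induce X :=
      ⟨fun k => ⟨⟨t, k.1⟩, k.2⟩, fun h => .inner h⟩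
    (hfib t (hX _ hk) ⟨k, hk⟩ ⟨k', hk'⟩).map f
  have along (r r' : I) (p : (T.induce I).Walk r r') (k : κ r) (k' : κ r')
      (hk : ⟨r, k⟩ ∈ X) (hk' : ⟨r', k'⟩ ∈ X) :
      ((glue T S gate).induce X).Reachable ⟨_, hk⟩ ⟨_, hk'⟩ := by
    induction p with
    | nil => exact within _ k k' hk hk'
    | @cons r q r' h p ih =>
      have hr := hgate _ _ r.2 q.2 h
      have hq := hgate _ _ q.2 r.2 h.symm
      have hlink : ((glue T S gate).induce X).Adj ⟨_, hr⟩ ⟨_, hq⟩ := .link h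
      exact ((within _ k _ hk hr).trans hlink.reachable).trans (ih _ k' hq hk')
  rintro ⟨⟨r, k⟩, hk⟩ ⟨⟨r', k'⟩, hk'⟩
  obtain ⟨p⟩ := hI ⟨r, hX _ hk⟩ ⟨r', hX _ hk'⟩
  exact along _ _ p k k' hk hk'

theorem glue_connected (hT : T.Connected) (hS : ∀ t, (S t).Connected) :
    (glue T S gate).Connected := by
  have hne : Nonempty (Σ t, κ t) := ⟨⟨hT.nonempty.some, (hS _).nonempty.some⟩⟩
  refine (connected_iff _).mpr ⟨(induceUnivIso _).preconnected_iff.mp ?_, hne⟩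
  exact preconnected_induce_glue (I := Set.univ) (fun _ _ => trivial)
    ((induceUnivIso T).preconnected_iff.mpr hT.preconnected)
    (fun t _ => (induceUnivIso (S t)).preconnected_iff.mpr (hS t).preconnected)
    fun _ _ _ _ _ => trivial

open Classical in
variable (gate) in
noncomputable def glueRetract (hT : T.IsTree) (t : ι) (x : Σ r, κ r) : κ t :=
  if h : x.1 = t then h ▸ x.2 else gate t (hT.firstStep t x.1)

theorem glueRetract_self (hT : T.IsTree) {t : ι} (k : κ t) : glueRetract gate hT t ⟨t, k⟩ = k :=
  dif_pos rfl

theorem glueRetract_of_ne (hT : T.IsTree) {t r : ι} (k : κ r) (h : r ≠ t) :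
    glueRetract gate hT t ⟨r, k⟩ = gate t (hT.firstStep t r) :=
  dif_neg h

theorem glueRetract_link (hT : T.IsTree) (t : ι) {r r' : ι} (h : T.Adj r r') :
    glueRetract gate hT t ⟨r, gate r r'⟩ = glueRetract gate hT t ⟨r', gate r' r⟩ := by
  by_cases hr : r = t
  · subst hr
    rw [glueRetract_self, glueRetract_of_ne _ _ h.ne', hT.firstStep_of_adj h]
  by_cases hr' : r' = t
  · subst hr'
    rw [glueRetract_self, glueRetract_of_ne _ _ hr, hT.firstStep_of_adj h.symm]
  rw [glueRetract_of_ne _ _ hr, glueRetract_of_ne _ _ hr', hT.firstStep_eq_of_adj h hr hr']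

theorem glue_isBridge_link (hT : T.IsAcyclic) {r r' : ι} (h : T.Adj r r') :
    (glue T S gate).IsBridge s(⟨r, gate r r'⟩, ⟨r', gate r' r⟩) := by
  refine IsBridge.of_map Sigma.fst (isAcyclic_iff_forall_adj_isBridge.mp hT h) ?_
  intro u v huv hne
  cases huv with
  | inner => rfl
  | @link q q' h' =>
    refine Adj.reachable ((deleteEdges_adj ..).mpr ⟨h', fun heq => hne ?_⟩)
    rcases Sym2.eq_iff.mp heq with ⟨rfl, rfl⟩ | ⟨rfl, rfl⟩
    · rfl
    · exact Sym2.eq_swap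

theorem glue_isBridge_inner (hT : T.IsTree) {t : ι} (hS : (S t).IsAcyclic) {a b : κ t}
    (h : (S t).Adj a b) : (glue T S gate).IsBridge s(⟨t, a⟩, ⟨t, b⟩) := by
  refine IsBridge.of_map (H := S t) (glueRetract gate hT t) ?_ ?_
  · rw [glueRetract_self, glueRetract_self]
    exact isAcyclic_iff_forall_adj_isBridge.mp hS h
  intro u v huv hne
  cases huv with
  | @inner q a' b' h' =>
    by_cases hq : q = t
    · subst hq
      simp only [glueRetract_self]
      refine Adj.reachable ((deleteEdges_adj ..).mpr ⟨h', fun heq => hne ?_⟩)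
      rcases Sym2.eq_iff.mp heq with ⟨rfl, rfl⟩ | ⟨rfl, rfl⟩
      · rfl
      · exact Sym2.eq_swap
    · rw [glueRetract_of_ne _ _ hq, glueRetract_of_ne _ _ hq]
  | link h' => rw [glueRetract_link hT t h']

theorem glue_isAcyclic (hT : T.IsTree) (hS : ∀ t, (S t).IsAcyclic) :
    (glue T S gate).IsAcyclic :=
  isAcyclic_iff_forall_adj_isBridge.mpr fun _ _ h => by
    cases h with
    | inner h => exact glue_isBridge_inner hT (hS _) h
    | link h => exact glue_isBridge_link hT.isAcyclic h

theorem glue_isTree (hT : T.IsTree) (hS : ∀ t, (S t).IsTree) : (glue T S gate).IsTree :=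
  ⟨glue_connected hT.connected fun t => (hS t).connected,
    glue_isAcyclic hT fun t => (hS t).isAcyclic⟩

end Glue

end SimpleGraph

theorem IsTreeDecomp.exists_subset_bag_of_isClique {W κ : Type} {H : SimpleGraph W}
    {S : SimpleGraph κ} {b : κ → Finset W} (hd : IsTreeDecomp H S b) {K : Set W}
    (hK : H.IsClique K) (hKfin : K.Finite) : ∃ j, K ⊆ b j := by
  obtain ⟨hS, hcov, hedge, hconn⟩ := hd
  rcases K.eq_empty_or_nonempty with rfl | hne
  · exact ⟨hS.connected.nonempty.some, Set.empty_subset _⟩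
  obtain ⟨j, hj⟩ := hS.helly (s := hKfin.toFinset)
    (A := fun u => {j | u ∈ b j}) (hKfin.toFinset_nonempty.mpr hne)
    (fun u _ => hS.isAcyclic.isPathConvex (hconn u).preconnected)
    fun u hu v hv => by
      by_cases huv : u = v
      · subst huv
        obtain ⟨j, hj⟩ := hcov u
        exact ⟨j, hj, hj⟩
      · exact hedge u v (hK (hKfin.mem_toFinset.mp hu) (hKfin.mem_toFinset.mp hv) huv)
  exact ⟨j, fun u hu => hj u (hKfin.mem_toFinset.mpr hu)⟩

section Torso

variable {V ι : Type} {G : SimpleGraph V} {T : SimpleGraph ι} {bag : ι → Finset V}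

theorem torso_isClique_adhesion {s t : ι} (h : T.Adj s t) :
    (torso G T bag t).IsClique {x | x.1 ∈ bag s} :=
  fun _ hx _ hy hxy => ⟨hxy, Or.inr ⟨s, h, hx, hy⟩⟩

theorem torso_adj_of_adj {t : ι} {x y : {v // v ∈ bag t}} (h : G.Adj x y) :
    (torso G T bag t).Adj x y :=
  ⟨fun hxy => h.ne (congrArg Subtype.val hxy), Or.inl h⟩

theorem IsTreeDecomp.exists_isTreeDecomp_glue {κ : ι → Type} {S : ∀ t, SimpleGraph (κ t)}
    {bag' : ∀ t, κ t → Finset {v // v ∈ bag t}} (hdec : IsTreeDecomp G T bag)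
    (hS : ∀ t, IsTreeDecomp (torso G T bag t) (S t) (bag' t)) :
    ∃ gate : ∀ t, ι → κ t, IsTreeDecomp G (glue T S gate)
      fun x => (bag' x.1 x.2).map (Function.Embedding.subtype _) := by
  obtain ⟨hT, hcov, hedge, hconn⟩ := hdec
  have hgate (t s : ι) : ∃ j : κ t, T.Adj s t →
      {x : {v // v ∈ bag t} | x.1 ∈ bag s} ⊆ ↑(bag' t j) := by
    by_cases h : T.Adj s t
    · obtain ⟨j, hj⟩ := (hS t).exists_subset_bag_of_isClique (torso_isClique_adhesion h)
        (Set.toFinite _)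
      exact ⟨j, fun _ => hj⟩
    · exact ⟨(hS t).1.connected.nonempty.some, fun h' => absurd h' h⟩
  choose gate hgate using hgate
  have hmem {v : V} {x : Σ t, κ t} : v ∈ (bag' x.1 x.2).map (Function.Embedding.subtype _) ↔
      ∃ h : v ∈ bag x.1, ⟨v, h⟩ ∈ bag' x.1 x.2 := by
    simp
  refine ⟨gate, glue_isTree hT fun t => (hS t).1, fun v => ?_, fun u v huv => ?_, fun v => ?_⟩
  · obtain ⟨t, ht⟩ := hcov v
    obtain ⟨k, hk⟩ := (hS t).2.1 ⟨v, ht⟩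
    exact ⟨⟨t, k⟩, hmem.mpr ⟨ht, hk⟩⟩
  · obtain ⟨t, hu, hv⟩ := hedge u v huv
    obtain ⟨k, hku, hkv⟩ := (hS t).2.2.1 _ _ (torso_adj_of_adj (x := ⟨u, hu⟩) (y := ⟨v, hv⟩) huv)
    exact ⟨⟨t, k⟩, hmem.mpr ⟨hu, hku⟩, hmem.mpr ⟨hv, hkv⟩⟩
  · obtain ⟨t, ht⟩ := hcov v
    obtain ⟨k, hk⟩ := (hS t).2.1 ⟨v, ht⟩
    refine (connected_iff _).mpr ⟨preconnected_induce_glue (I := {i | v ∈ bag i})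
      (fun x hx => (hmem.mp hx).1) (hconn v).preconnected (fun r hr => ?_)
      (fun r r' hr hr' h => hmem.mpr ⟨hr, hgate r r' h.symm (a := ⟨v, hr⟩) hr'⟩),
      ⟨⟨⟨t, k⟩, hmem.mpr ⟨ht, hk⟩⟩⟩⟩
    have hfib : {k | v ∈ (bag' r k).map (Function.Embedding.subtype _)} =
        {k | ⟨v, hr⟩ ∈ bag' r k} :=
      Set.ext fun k => (hmem (x := ⟨r, k⟩)).trans ⟨fun ⟨_, h⟩ => h, fun h => ⟨hr, h⟩⟩
    show ((S r).induce {k | v ∈ (bag' r k).map (Function.Embedding.subtype _)}).Preconnected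
    rw [hfib]
    exact ((hS r).2.2.2 ⟨v, hr⟩).preconnected

end Torso

theorem stmt_16_general {V ι : Type} (G : SimpleGraph V)
    (T : SimpleGraph ι) (bag : ι → Finset V)
    (hdec : IsTreeDecomp G T bag) (w : ℕ)
    -- every torso has a tree-decomposition of width less than w
    (htorso : ∀ t : ι, ∃ (κ : Type) (S : SimpleGraph κ)
        (bag' : κ → Finset {v : V // v ∈ bag t}),
      IsTreeDecomp (torso G T bag t) S bag' ∧ ∀ j, (bag' j).card ≤ w) :
    -- then G has a tree-decomposition of width less than w
    ∃ (κ : Type) (S : SimpleGraph κ) (bag'' : κ → Finset V),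
      IsTreeDecomp G S bag'' ∧ ∀ j, (bag'' j).card ≤ w := by
  choose κ S bag' hS hw using htorso
  obtain ⟨gate, hglue⟩ := hdec.exists_isTreeDecomp_glue hS
  exact ⟨_, _, _, hglue, fun x => (Finset.card_map _).trans_le (hw x.1 x.2)⟩

theorem stmt_16 {V ι : Type} [Fintype V] (G : SimpleGraph V)
    (T : SimpleGraph ι) (bag : ι → Finset V)
    (hdec : IsTreeDecomp G T bag) (w : ℕ)
    -- every torso has a tree-decomposition of width less than w
    (htorso : ∀ t : ι, ∃ (κ : Type) (S : SimpleGraph κ)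
        (bag' : κ → Finset {v : V // v ∈ bag t}),
      IsTreeDecomp (torso G T bag t) S bag' ∧ ∀ j, (bag' j).card ≤ w) :
    -- then G has a tree-decomposition of width less than w
    ∃ (κ : Type) (S : SimpleGraph κ) (bag'' : κ → Finset V),
      IsTreeDecomp G S bag'' ∧ ∀ j, (bag'' j).card ≤ w :=
  stmt_16_general G T bag hdec w htorso
end
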